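/- arXiv:1711.08837 — 10 statements merged into one kernel-verified Lean document; each statement's English description precedes it below -/
import Mathlib

section
/- If (M, ≤) is a well-quasi-order, then the set M* of finite sequences of elements of M, ordered by the subsequence relation (where (a_1,...,a_m) ≤* (b_1,...,b_n) iff there exist indices 1 ≤ i_1 < ... < i_m ≤ n with a_j ≤ b_{i_j} for all j), is a well-quasi-order. -/
/-- A relation is a well-quasi-order if every infinite sequence contains
indices `i < j` with `r (f i) (f j)`. -/
def IsWQO {α : Type*} (r : α → α → Prop) : Prop :=
  ∀ f : ℕ → α, ∃ i j : ℕ, i < j ∧ r (f i) (f j)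

theorem WellQuasiOrdered.refl {α : Type*} {r : α → α → Prop} (h : WellQuasiOrdered r) (a : α) :
    r a a :=
  let ⟨_, _, _, haa⟩ := h fun _ ↦ a
  haa

theorem WellQuasiOrdered.sublistForall₂ {α : Type*} {r : α → α → Prop} [IsPreorder α r]
    (h : WellQuasiOrdered r) : WellQuasiOrdered (List.SublistForall₂ r) := by
  have hLists := (Set.partiallyWellOrderedOn_univ_iff.2 h).partiallyWellOrderedOn_sublistForall₂ r
  simpa only [Set.mem_univ, imp_true_iff, Set.ofPred_true,
    Set.partiallyWellOrderedOn_univ_iff] using hLists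

theorem higman_lemma_general {α : Type*} (r : α → α → Prop)
    (htrans : Transitive r) (hwqo : IsWQO r) :
    IsWQO (List.SublistForall₂ r) :=
  -- `IsWQO` unfolds to Mathlib's `WellQuasiOrdered`.
  have : IsPreorder α r := { refl := WellQuasiOrdered.refl hwqo, trans := @htrans }
  WellQuasiOrdered.sublistForall₂ hwqo

/-- Higman's Lemma: if `(M, ≤)` is a well-quasi-order, then the finite sequences
over `M` ordered by the subsequence relation form a well-quasi-order. -/
theorem higman_lemma {α : Type*} (r : α → α → Prop)
    (hrefl : Reflexive r) (htrans : Transitive r) (hwqo : IsWQO r) :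
    IsWQO (List.SublistForall₂ r) :=
  higman_lemma_general r htrans hwqo
end

section
/- Let G be a 3-partite graph with parts V_1, V_2, V_3 that contains no rainbow triangle and no rainbow independent set of size 3 (with one vertex in each part), and suppose the bipartite graphs G[V_1 ∪ V_2] and G[V_1 ∪ V_3] are both 2P_2-free. Then the vertices of V_1 admit a linear ordering x_1, ..., x_ℓ such that for i < j, N(x_i) ∩ V_2 ⊇ N(x_j) ∩ V_2 and N(x_i) ∩ V_3 ⊆ N(x_j) ∩ V_3. -/
/-!
Sort `V₁` by the transitive relation `x ≼ y ↔ N(y) ∩ V₂ ⊆ N(x) ∩ V₂ ∧ N(x) ∩ V₃ ⊆ N(y) ∩ V₃`; the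
point is that it is total on `V₁`.
Freeness of `2P₂` makes the `V₂`-neighbourhoods and the `V₃`-neighbourhoods of `V₁` two chains. The
two chains are oriented oppositely: if `c ∈ V₃` sees `x` but not `y`, then every `V₂`-neighbour `b`
of `x` sees `y`, since otherwise `y, b, c` is a rainbow `3P₁` unless `b ∼ c`, and then `x, b, c` is
a rainbow triangle.
-/

theorem Set.Finite.exists_list_nodup_pairwise {α : Type*} {s : Set α} (hs : s.Finite)
    {r : α → α → Prop} (htrans : ∀ x ∈ s, ∀ y ∈ s, ∀ z ∈ s, r x y → r y z → r x z)
    (htotal : ∀ x ∈ s, ∀ y ∈ s, r x y ∨ r y x) :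
    ∃ l : List α, l.Nodup ∧ (∀ x, x ∈ l ↔ x ∈ s) ∧ l.Pairwise r := by
  classical
  have := hs.fintype
  let le : s → s → Bool := fun x y => decide (r x y)
  have hsorted : ((Finset.univ : Finset s).toList.mergeSort le).Pairwise fun x y => r x.1 y.1 := by
    refine (List.pairwise_mergeSort (fun x y z => ?_) (fun x y => ?_) _).imp
      fun h => by simpa [le] using h
    · simpa [le] using htrans x x.2 y y.2 z z.2
    · simpa [le] using htotal x x.2 y y.2
  refine ⟨_, ?_, fun x => ?_, List.pairwise_map.mpr hsorted⟩
  · exact ((List.mergeSort_perm _ _).nodup_iff.mpr (Finset.nodup_toList _)).map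
      Subtype.val_injective
  · simp

namespace SimpleGraph

variable {V : Type*} (G : SimpleGraph V)

def NeighborPrecedes (B C : Set V) (x y : V) : Prop :=
  G.neighborSet y ∩ B ⊆ G.neighborSet x ∩ B ∧ G.neighborSet x ∩ C ⊆ G.neighborSet y ∩ C

variable {G}

theorem NeighborPrecedes.trans {B C : Set V} {x y z : V} (hxy : G.NeighborPrecedes B C x y)
    (hyz : G.NeighborPrecedes B C y z) : G.NeighborPrecedes B C x z :=
  ⟨hyz.1.trans hxy.1, hxy.2.trans hyz.2⟩

theorem neighborSet_inter_subset_total {A B : Set V}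
    (h2P2 : ¬ ∃ a₁ a₂ b₁ b₂ : V, a₁ ∈ A ∧ a₂ ∈ A ∧ b₁ ∈ B ∧ b₂ ∈ B ∧
        G.Adj a₁ b₁ ∧ G.Adj a₂ b₂ ∧ ¬ G.Adj a₁ b₂ ∧ ¬ G.Adj a₂ b₁)
    {x y : V} (hx : x ∈ A) (hy : y ∈ A) :
    G.neighborSet x ∩ B ⊆ G.neighborSet y ∩ B ∨ G.neighborSet y ∩ B ⊆ G.neighborSet x ∩ B := by
  by_contra! h
  obtain ⟨⟨b₁, ⟨hxb₁, hb₁⟩, hyb₁⟩, ⟨b₂, ⟨hyb₂, hb₂⟩, hxb₂⟩⟩ :=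
    And.imp Set.not_subset.mp Set.not_subset.mp h
  exact h2P2 ⟨x, y, b₁, b₂, hx, hy, hb₁, hb₂, hxb₁, hyb₂,
    fun h => hxb₂ ⟨h, hb₂⟩, fun h => hyb₁ ⟨h, hb₁⟩⟩

theorem neighborSet_inter_subset_of_separating {A B C : Set V}
    (hnoK3 : ¬ ∃ x ∈ A, ∃ y ∈ B, ∃ z ∈ C, G.Adj x y ∧ G.Adj y z ∧ G.Adj x z)
    (hno3P1 : ¬ ∃ x ∈ A, ∃ y ∈ B, ∃ z ∈ C, ¬ G.Adj x y ∧ ¬ G.Adj y z ∧ ¬ G.Adj x z)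
    {x y c : V} (hx : x ∈ A) (hy : y ∈ A) (hc : c ∈ C) (hxc : G.Adj x c) (hyc : ¬ G.Adj y c) :
    G.neighborSet x ∩ B ⊆ G.neighborSet y ∩ B := by
  rintro b ⟨hxb, hb⟩
  by_contra hyb
  have hbc : G.Adj b c := by
    by_contra hbc
    exact hno3P1 ⟨y, hy, b, hb, c, hc, fun h => hyb ⟨h, hb⟩, hbc, hyc⟩
  exact hnoK3 ⟨x, hx, b, hb, c, hc, hxb, hbc, hxc⟩

theorem neighborPrecedes_total {A B C : Set V}
    (hnoK3 : ¬ ∃ x ∈ A, ∃ y ∈ B, ∃ z ∈ C, G.Adj x y ∧ G.Adj y z ∧ G.Adj x z)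
    (hno3P1 : ¬ ∃ x ∈ A, ∃ y ∈ B, ∃ z ∈ C, ¬ G.Adj x y ∧ ¬ G.Adj y z ∧ ¬ G.Adj x z)
    (h2P2B : ¬ ∃ a₁ a₂ b₁ b₂ : V, a₁ ∈ A ∧ a₂ ∈ A ∧ b₁ ∈ B ∧ b₂ ∈ B ∧
        G.Adj a₁ b₁ ∧ G.Adj a₂ b₂ ∧ ¬ G.Adj a₁ b₂ ∧ ¬ G.Adj a₂ b₁)
    (h2P2C : ¬ ∃ a₁ a₂ c₁ c₂ : V, a₁ ∈ A ∧ a₂ ∈ A ∧ c₁ ∈ C ∧ c₂ ∈ C ∧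
        G.Adj a₁ c₁ ∧ G.Adj a₂ c₂ ∧ ¬ G.Adj a₁ c₂ ∧ ¬ G.Adj a₂ c₁)
    {x y : V} (hx : x ∈ A) (hy : y ∈ A) :
    G.NeighborPrecedes B C x y ∨ G.NeighborPrecedes B C y x := by
  wlog hB : G.neighborSet y ∩ B ⊆ G.neighborSet x ∩ B generalizing x y
  · exact (this hy hx <| (neighborSet_inter_subset_total h2P2B hx hy).resolve_right hB).symm
  by_cases hC : G.neighborSet x ∩ C ⊆ G.neighborSet y ∩ C
  · exact .inl ⟨hB, hC⟩
  obtain ⟨c, ⟨hxc, hc⟩, hyc⟩ := Set.not_subset.mp hC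
  exact .inr ⟨neighborSet_inter_subset_of_separating hnoK3 hno3P1 hx hy hc hxc
      fun h => hyc ⟨h, hc⟩,
    (neighborSet_inter_subset_total h2P2C hx hy).resolve_left hC⟩

end SimpleGraph

theorem curious_type01_linear_order_general {V : Type*} [Fintype V]
    (G : SimpleGraph V) (V₁ V₂ V₃ : Set V)
    (hnoK3 : ¬ ∃ x ∈ V₁, ∃ y ∈ V₂, ∃ z ∈ V₃, G.Adj x y ∧ G.Adj y z ∧ G.Adj x z)
    (hno3P1 : ¬ ∃ x ∈ V₁, ∃ y ∈ V₂, ∃ z ∈ V₃,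
        ¬ G.Adj x y ∧ ¬ G.Adj y z ∧ ¬ G.Adj x z)
    (h2P2₁₂ : ¬ ∃ a₁ a₂ b₁ b₂ : V, a₁ ∈ V₁ ∧ a₂ ∈ V₁ ∧ b₁ ∈ V₂ ∧ b₂ ∈ V₂ ∧
        G.Adj a₁ b₁ ∧ G.Adj a₂ b₂ ∧ ¬ G.Adj a₁ b₂ ∧ ¬ G.Adj a₂ b₁)
    (h2P2₁₃ : ¬ ∃ a₁ a₂ b₁ b₂ : V, a₁ ∈ V₁ ∧ a₂ ∈ V₁ ∧ b₁ ∈ V₃ ∧ b₂ ∈ V₃ ∧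
        G.Adj a₁ b₁ ∧ G.Adj a₂ b₂ ∧ ¬ G.Adj a₁ b₂ ∧ ¬ G.Adj a₂ b₁) :
    ∃ l : List V, l.Nodup ∧ (∀ x : V, x ∈ l ↔ x ∈ V₁) ∧
      ∀ (i j : ℕ) (hi : i < l.length) (hj : j < l.length), i < j →
        (G.neighborSet (l.get ⟨j, hj⟩) ∩ V₂ ⊆ G.neighborSet (l.get ⟨i, hi⟩) ∩ V₂) ∧
        (G.neighborSet (l.get ⟨i, hi⟩) ∩ V₃ ⊆ G.neighborSet (l.get ⟨j, hj⟩) ∩ V₃) := by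
  obtain ⟨l, hnodup, hmem, hsorted⟩ :=
    (Set.toFinite V₁).exists_list_nodup_pairwise (r := G.NeighborPrecedes V₂ V₃)
      (fun _ _ _ _ _ _ hxy hyz => hxy.trans hyz)
      (fun _ hx _ hy => G.neighborPrecedes_total hnoK3 hno3P1 h2P2₁₂ h2P2₁₃ hx hy)
  exact ⟨l, hnodup, hmem, fun i j hi hj hij =>
    List.pairwise_iff_get.mp hsorted ⟨i, hi⟩ ⟨j, hj⟩ hij⟩

/-- For a curious 3-partite graph (no rainbow triangle, no rainbow independent
triple) in which `G[V₁ ∪ V₂]` and `G[V₁ ∪ V₃]` are `2P₂`-free, the vertices of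
`V₁` admit a linear ordering which is decreasing towards `V₂` and increasing
towards `V₃`. -/
theorem curious_type01_linear_order {V : Type*} [Fintype V]
    (G : SimpleGraph V) (V₁ V₂ V₃ : Set V)
    (hpart : V₁ ∪ V₂ ∪ V₃ = Set.univ)
    (h12 : Disjoint V₁ V₂) (h13 : Disjoint V₁ V₃) (h23 : Disjoint V₂ V₃)
    (hind₁ : ∀ u ∈ V₁, ∀ w ∈ V₁, ¬ G.Adj u w)
    (hind₂ : ∀ u ∈ V₂, ∀ w ∈ V₂, ¬ G.Adj u w)
    (hind₃ : ∀ u ∈ V₃, ∀ w ∈ V₃, ¬ G.Adj u w)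
    (hnoK3 : ¬ ∃ x ∈ V₁, ∃ y ∈ V₂, ∃ z ∈ V₃, G.Adj x y ∧ G.Adj y z ∧ G.Adj x z)
    (hno3P1 : ¬ ∃ x ∈ V₁, ∃ y ∈ V₂, ∃ z ∈ V₃,
        ¬ G.Adj x y ∧ ¬ G.Adj y z ∧ ¬ G.Adj x z)
    (h2P2₁₂ : ¬ ∃ a₁ a₂ b₁ b₂ : V, a₁ ∈ V₁ ∧ a₂ ∈ V₁ ∧ b₁ ∈ V₂ ∧ b₂ ∈ V₂ ∧
        G.Adj a₁ b₁ ∧ G.Adj a₂ b₂ ∧ ¬ G.Adj a₁ b₂ ∧ ¬ G.Adj a₂ b₁)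
    (h2P2₁₃ : ¬ ∃ a₁ a₂ b₁ b₂ : V, a₁ ∈ V₁ ∧ a₂ ∈ V₁ ∧ b₁ ∈ V₃ ∧ b₂ ∈ V₃ ∧
        G.Adj a₁ b₁ ∧ G.Adj a₂ b₂ ∧ ¬ G.Adj a₁ b₂ ∧ ¬ G.Adj a₂ b₁) :
    ∃ l : List V, l.Nodup ∧ (∀ x : V, x ∈ l ↔ x ∈ V₁) ∧
      ∀ (i j : ℕ) (hi : i < l.length) (hj : j < l.length), i < j →
        (G.neighborSet (l.get ⟨j, hj⟩) ∩ V₂ ⊆ G.neighborSet (l.get ⟨i, hi⟩) ∩ V₂) ∧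
        (G.neighborSet (l.get ⟨i, hi⟩) ∩ V₃ ⊆ G.neighborSet (l.get ⟨j, hj⟩) ∩ V₃) :=
  curious_type01_linear_order_general G V₁ V₂ V₃ hnoK3 hno3P1 h2P2₁₂ h2P2₁₃
end

section
/- Let G be a 3-partite graph with parts V_1, V_2, V_3 containing no rainbow K_3 and no rainbow 3P_1, and let x_1, x_2 ∈ V_1 and y_1, y_2 ∈ V_2 induce a 2P_2 with edges x_1y_1 and x_2y_2. Then every vertex z ∈ V_3 has exactly two neighbours among {x_1, x_2, y_1, y_2}, and these two neighbours either both lie in {x_1, x_2} or both lie in {y_1, y_2}. -/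
/-! Read the induced `2P₂` as the alternating cycle `x₁ y₁ x₂ y₂` of edges `x₁y₁`, `x₂y₂` and
non-edges `y₁x₂`, `y₂x₁`. A vertex `z ∈ V₃` sees at most one end of each edge (no rainbow `K₃`)
and at least one end of each non-edge (no rainbow `3P₁`), so its adjacency alternates around the
cycle: it sees either `x₁, x₂` or `y₁, y₂`, and nothing else. -/

namespace SimpleGraph

variable {V : Type*} {G : SimpleGraph V} {V₁ V₂ V₃ : Set V} {x y z : V}

theorem not_adj_and_adj_of_noRainbowK3
    (hnoK3 : ¬ ∃ x ∈ V₁, ∃ y ∈ V₂, ∃ z ∈ V₃, G.Adj x y ∧ G.Adj y z ∧ G.Adj x z)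
    (hx : x ∈ V₁) (hy : y ∈ V₂) (hz : z ∈ V₃) (hxy : G.Adj x y) :
    ¬ (G.Adj z x ∧ G.Adj z y) :=
  fun ⟨hzx, hzy⟩ => hnoK3 ⟨x, hx, y, hy, z, hz, hxy, hzy.symm, hzx.symm⟩

theorem adj_or_adj_of_noRainbow3P1
    (hno3P1 : ¬ ∃ x ∈ V₁, ∃ y ∈ V₂, ∃ z ∈ V₃, ¬ G.Adj x y ∧ ¬ G.Adj y z ∧ ¬ G.Adj x z)
    (hx : x ∈ V₁) (hy : y ∈ V₂) (hz : z ∈ V₃) (hxy : ¬ G.Adj x y) :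
    G.Adj z x ∨ G.Adj z y := by
  by_contra! ⟨hzx, hzy⟩
  exact hno3P1 ⟨x, hx, y, hy, z, hz, hxy, fun h => hzy h.symm, fun h => hzx h.symm⟩

end SimpleGraph

open SimpleGraph

theorem curious_nbrs_in_2P2_general {V : Type*}
    (G : SimpleGraph V) (V₁ V₂ V₃ : Set V)
    (hnoK3 : ¬ ∃ x ∈ V₁, ∃ y ∈ V₂, ∃ z ∈ V₃, G.Adj x y ∧ G.Adj y z ∧ G.Adj x z)
    (hno3P1 : ¬ ∃ x ∈ V₁, ∃ y ∈ V₂, ∃ z ∈ V₃,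
        ¬ G.Adj x y ∧ ¬ G.Adj y z ∧ ¬ G.Adj x z)
    (x₁ x₂ y₁ y₂ : V) (hx₁ : x₁ ∈ V₁) (hx₂ : x₂ ∈ V₁) (hy₁ : y₁ ∈ V₂) (hy₂ : y₂ ∈ V₂)
    (he₁ : G.Adj x₁ y₁) (he₂ : G.Adj x₂ y₂)
    (hne₁ : ¬ G.Adj x₁ y₂) (hne₂ : ¬ G.Adj x₂ y₁) :
    ∀ z ∈ V₃,
      (G.Adj z x₁ ∧ G.Adj z x₂ ∧ ¬ G.Adj z y₁ ∧ ¬ G.Adj z y₂) ∨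
      (G.Adj z y₁ ∧ G.Adj z y₂ ∧ ¬ G.Adj z x₁ ∧ ¬ G.Adj z x₂) := by
  intro z hz
  have atMostOne₁ := not_adj_and_adj_of_noRainbowK3 hnoK3 hx₁ hy₁ hz he₁
  have atMostOne₂ := not_adj_and_adj_of_noRainbowK3 hnoK3 hx₂ hy₂ hz he₂
  have atLeastOne₁ := adj_or_adj_of_noRainbow3P1 hno3P1 hx₁ hy₂ hz hne₁
  have atLeastOne₂ := adj_or_adj_of_noRainbow3P1 hno3P1 hx₂ hy₁ hz hne₂
  tauto

/-- In a curious 3-partite graph, given a `2P₂` induced between `V₁` and `V₂`,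
every vertex of `V₃` has exactly two neighbours on the `2P₂`, and these
neighbours either both lie in `V₁` or both lie in `V₂`. -/
theorem curious_nbrs_in_2P2 {V : Type*} [Fintype V]
    (G : SimpleGraph V) (V₁ V₂ V₃ : Set V)
    (hpart : V₁ ∪ V₂ ∪ V₃ = Set.univ)
    (h12 : Disjoint V₁ V₂) (h13 : Disjoint V₁ V₃) (h23 : Disjoint V₂ V₃)
    (hind₁ : ∀ u ∈ V₁, ∀ w ∈ V₁, ¬ G.Adj u w)
    (hind₂ : ∀ u ∈ V₂, ∀ w ∈ V₂, ¬ G.Adj u w)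
    (hind₃ : ∀ u ∈ V₃, ∀ w ∈ V₃, ¬ G.Adj u w)
    (hnoK3 : ¬ ∃ x ∈ V₁, ∃ y ∈ V₂, ∃ z ∈ V₃, G.Adj x y ∧ G.Adj y z ∧ G.Adj x z)
    (hno3P1 : ¬ ∃ x ∈ V₁, ∃ y ∈ V₂, ∃ z ∈ V₃,
        ¬ G.Adj x y ∧ ¬ G.Adj y z ∧ ¬ G.Adj x z)
    (x₁ x₂ y₁ y₂ : V) (hx₁ : x₁ ∈ V₁) (hx₂ : x₂ ∈ V₁) (hy₁ : y₁ ∈ V₂) (hy₂ : y₂ ∈ V₂)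
    (he₁ : G.Adj x₁ y₁) (he₂ : G.Adj x₂ y₂)
    (hne₁ : ¬ G.Adj x₁ y₂) (hne₂ : ¬ G.Adj x₂ y₁) :
    ∀ z ∈ V₃,
      (G.Adj z x₁ ∧ G.Adj z x₂ ∧ ¬ G.Adj z y₁ ∧ ¬ G.Adj z y₂) ∨
      (G.Adj z y₁ ∧ G.Adj z y₂ ∧ ¬ G.Adj z x₁ ∧ ¬ G.Adj z x₂) :=
  curious_nbrs_in_2P2_general G V₁ V₂ V₃ hnoK3 hno3P1 x₁ x₂ y₁ y₂ hx₁ hx₂ hy₁ hy₂ he₁ he₂ hne₁ hne₂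
end

section
/- Let G be a (K_3, P_2 + P_4)-free graph containing an induced 5-cycle on vertices v_1, ..., v_5 in cyclic order. Let U be the set of vertices with no neighbour on the cycle, and for each i let W_i be the set of vertices whose unique neighbour on the cycle is v_i. Then for each i, the set U ∪ W_i is an independent set. -/
/-- A graph is `(P₂ + P₄)`-free if it contains no six distinct vertices inducing
the disjoint union of a 2-vertex path `a b` and a 4-vertex path `c d e f`. -/
def P2P4Free {V : Type*} (G : SimpleGraph V) : Prop :=
  ¬ ∃ a b c d e f : V, [a, b, c, d, e, f].Nodup ∧
    G.Adj a b ∧ G.Adj c d ∧ G.Adj d e ∧ G.Adj e f ∧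
    ¬ G.Adj a c ∧ ¬ G.Adj a d ∧ ¬ G.Adj a e ∧ ¬ G.Adj a f ∧
    ¬ G.Adj b c ∧ ¬ G.Adj b d ∧ ¬ G.Adj b e ∧ ¬ G.Adj b f ∧
    ¬ G.Adj c e ∧ ¬ G.Adj c f ∧ ¬ G.Adj d f

/-- The set of vertices not on the 5-cycle `v` with no neighbour on the cycle. -/
def cycU {V : Type*} (G : SimpleGraph V) (v : Fin 5 → V) : Set V :=
  {u | u ∉ Set.range v ∧ ∀ j : Fin 5, ¬ G.Adj u (v j)}

/-- The set of vertices not on the 5-cycle `v` whose unique neighbour on the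
cycle is `v i`. -/
def cycW {V : Type*} (G : SimpleGraph V) (v : Fin 5 → V) (i : Fin 5) : Set V :=
  {u | u ∉ Set.range v ∧ ∀ j : Fin 5, G.Adj u (v j) ↔ j = i}

/-- The set of vertices not on the 5-cycle `v` adjacent on the cycle to exactly
`v (i - 1)` and `v (i + 1)`. -/
def cycV {V : Type*} (G : SimpleGraph V) (v : Fin 5 → V) (i : Fin 5) : Set V :=
  {u | u ∉ Set.range v ∧ ∀ j : Fin 5, G.Adj u (v j) ↔ (j = i - 1 ∨ j = i + 1)}

/-! An edge `xy` inside `U ∪ Wᵢ` has no neighbour among `v (i+1), …, v (i+4)`, and these four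
vertices induce a `P₄` on the cycle; so `x y` and that path induce `P₂ + P₄`. -/

namespace P2P4Free

variable {V : Type*} {G : SimpleGraph V}

theorem not_adj_of_anticomplete_inducedP4 (hG : P2P4Free G) {a b c d e f : V}
    (hcd : G.Adj c d) (hde : G.Adj d e) (hef : G.Adj e f)
    (hce : ¬ G.Adj c e) (hcf : ¬ G.Adj c f) (hdf : ¬ G.Adj d f)
    (ha : ∀ z ∈ [c, d, e, f], ¬ G.Adj a z) (hb : ∀ z ∈ [c, d, e, f], ¬ G.Adj b z) :
    ¬ G.Adj a b := by
  intro hab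
  simp only [List.mem_cons, List.not_mem_nil, or_false, forall_eq_or_imp, forall_eq] at ha hb
  obtain ⟨hac, had, hae, haf⟩ := ha
  obtain ⟨hbc, hbd, hbe, hbf⟩ := hb
  refine hG ⟨a, b, c, d, e, f, ?_, hab, hcd, hde, hef, hac, had, hae, haf, hbc, hbd, hbe, hbf,
    hce, hcf, hdf⟩
  simp only [List.nodup_cons, List.mem_cons, List.not_mem_nil, or_false, not_or,
    List.nodup_nil, not_false_eq_true, and_true]
  -- any coincidence among the six vertices would turn one of the edges into a non-edge
  refine ⟨⟨hab.ne, ?_, ?_, ?_, ?_⟩, ⟨?_, ?_, ?_, ?_⟩, ⟨hcd.ne, ?_, ?_⟩, ⟨hde.ne, ?_⟩, hef.ne⟩ <;>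
    rintro rfl <;> simp_all [G.adj_comm]

end P2P4Free

theorem not_adj_of_mem_cycU_union_cycW {V : Type*} {G : SimpleGraph V} {v : Fin 5 → V}
    {i j : Fin 5} {x : V}
    (hx : x ∈ cycU G v ∪ cycW G v i) (hji : j ≠ i) : ¬ G.Adj x (v j) := by
  rcases hx with hU | hW
  · exact hU.2 j
  · exact fun h => hji ((hW.2 j).1 h)

theorem K3P2P4_UWi_independent_general {V : Type*} (G : SimpleGraph V)
    (hP2P4 : P2P4Free G)
    (v : Fin 5 → V)
    (hcyc : ∀ i : Fin 5, G.Adj (v i) (v (i + 1)))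
    (hindC : ∀ i j : Fin 5, G.Adj (v i) (v j) → j = i + 1 ∨ j = i - 1) :
    ∀ i : Fin 5, ∀ x ∈ cycU G v ∪ cycW G v i, ∀ y ∈ cycU G v ∪ cycW G v i,
      ¬ G.Adj x y := by
  intro i
  have hedge (k : Fin 5) : G.Adj (v (i + k)) (v (i + (k + 1))) := by
    simpa only [add_assoc] using hcyc (i + k)
  have hnonedge (k l : Fin 5) (h1 : l ≠ k + 1) (h2 : l ≠ k - 1) :
      ¬ G.Adj (v (i + k)) (v (i + l)) := fun h => by
    rcases hindC _ _ h with h' | h'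
    · exact h1 (add_left_cancel (h'.trans (add_assoc i k 1)))
    · exact h2 (add_left_cancel (h'.trans (add_sub_assoc i k 1)))
  have hout : ∀ x ∈ cycU G v ∪ cycW G v i, ∀ z ∈ [v (i + 1), v (i + 2), v (i + 3), v (i + 4)],
      ¬ G.Adj x z := by
    intro x hx z hz
    simp only [List.mem_cons, List.not_mem_nil, or_false] at hz
    rcases hz with rfl | rfl | rfl | rfl <;>
      exact not_adj_of_mem_cycU_union_cycW hx (by simp)
  intro x hx y hy
  exact hP2P4.not_adj_of_anticomplete_inducedP4 (hedge 1) (hedge 2) (hedge 3)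
    (hnonedge 1 3 (by decide) (by decide)) (hnonedge 1 4 (by decide) (by decide))
    (hnonedge 2 4 (by decide) (by decide)) (hout x hx) (hout y hy)

/-- In a `(K₃, P₂ + P₄)`-free graph with an induced 5-cycle, for each `i` the
set `U ∪ Wᵢ` is independent. -/
theorem K3P2P4_UWi_independent {V : Type*} [Fintype V] (G : SimpleGraph V)
    (hK3 : G.CliqueFree 3) (hP2P4 : P2P4Free G)
    (v : Fin 5 → V) (hinj : Function.Injective v)
    (hcyc : ∀ i : Fin 5, G.Adj (v i) (v (i + 1)))
    (hindC : ∀ i j : Fin 5, G.Adj (v i) (v j) → j = i + 1 ∨ j = i - 1) :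
    ∀ i : Fin 5, ∀ x ∈ cycU G v ∪ cycW G v i, ∀ y ∈ cycU G v ∪ cycW G v i,
      ¬ G.Adj x y :=
  K3P2P4_UWi_independent_general G hP2P4 v hcyc hindC
end

section
/- Let G be a (K_3, P_1 + P_5)-free graph containing an induced 5-cycle on vertices v_1, ..., v_5 in cyclic order. For each i, let W_i be the set of vertices whose unique neighbour on the cycle is v_i. Then W_i is complete to W_{i-1} ∪ W_{i+1} (every vertex of W_i is adjacent to every vertex of W_{i-1} ∪ W_{i+1}), with indices mod 5. -/
/-- A graph is `(P₁ + P₅)`-free if it contains no six distinct vertices inducing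
the disjoint union of an isolated vertex `a` and a 5-vertex path `b c d e f`. -/
def P1P5Free {V : Type*} (G : SimpleGraph V) : Prop :=
  ¬ ∃ a b c d e f : V, [a, b, c, d, e, f].Nodup ∧
    G.Adj b c ∧ G.Adj c d ∧ G.Adj d e ∧ G.Adj e f ∧
    ¬ G.Adj a b ∧ ¬ G.Adj a c ∧ ¬ G.Adj a d ∧ ¬ G.Adj a e ∧ ¬ G.Adj a f ∧
    ¬ G.Adj b d ∧ ¬ G.Adj b e ∧ ¬ G.Adj b f ∧
    ¬ G.Adj c e ∧ ¬ G.Adj c f ∧ ¬ G.Adj d f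

/-!
If `x ∈ Wᵢ` and `y ∈ Wᵢ₊₁` were non-adjacent, then `x` would be an isolated vertex next to the
induced path `y vᵢ₊₁ vᵢ₊₂ vᵢ₊₃ vᵢ₊₄`, a forbidden `P₁ + P₅`. The case `y ∈ Wᵢ₋₁` is the same
statement with the roles of `x` and `y` exchanged.
-/

namespace SimpleGraph

variable {V : Type*} {G : SimpleGraph V} {v : Fin 5 → V}

theorem mem_cycW_rotate (i a : Fin 5) {u : V} :
    u ∈ cycW G (fun b => v (i + b)) a ↔ u ∈ cycW G v (i + a) := by
  have hrange : Set.range (fun b => v (i + b)) = Set.range v :=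
    (add_left_surjective i).range_comp v
  simp only [cycW, Set.mem_ofPred_eq, hrange]
  refine and_congr_right fun _ => ⟨fun h j => ?_, fun h b => ?_⟩
  · simpa [sub_eq_iff_eq_add'] using h (j - i)
  · simpa using h (i + b)

theorem adj_of_mem_cycW_zero_of_mem_cycW_one (hP1P5 : P1P5Free G)
    (hinj : Function.Injective v) (hcyc : ∀ i : Fin 5, G.Adj (v i) (v (i + 1)))
    (hindC : ∀ i j : Fin 5, G.Adj (v i) (v j) → j = i + 1 ∨ j = i - 1)
    {x y : V} (hx : x ∈ cycW G v 0) (hy : y ∈ cycW G v 1) : G.Adj x y := by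
  by_contra hxy
  have hxv (j : Fin 5) (hj : j ≠ 0) : ¬ G.Adj x (v j) := fun h => hj ((hx.2 j).1 h)
  have hyv (j : Fin 5) (hj : j ≠ 1) : ¬ G.Adj y (v j) := fun h => hj ((hy.2 j).1 h)
  have hvv (a b : Fin 5) (h : ¬ (b = a + 1 ∨ b = a - 1)) : ¬ G.Adj (v a) (v b) :=
    fun hab => h (hindC a b hab)
  have hx_ne_y : x ≠ y := fun h => hyv 0 (by decide) (h ▸ (hx.2 0).2 rfl)
  refine hP1P5 ⟨x, y, v 1, v 2, v 3, v 4, ?_, (hy.2 1).2 rfl, hcyc 1, hcyc 2, hcyc 3, hxy,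
    hxv 1 (by decide), hxv 2 (by decide), hxv 3 (by decide), hxv 4 (by decide),
    hyv 2 (by decide), hyv 3 (by decide), hyv 4 (by decide),
    hvv 1 3 (by decide), hvv 1 4 (by decide), hvv 2 4 (by decide)⟩
  have hx_ne (j : Fin 5) : x ≠ v j := fun h => hx.1 ⟨j, h.symm⟩
  have hy_ne (j : Fin 5) : y ≠ v j := fun h => hy.1 ⟨j, h.symm⟩
  simp [hx_ne_y, hx_ne, hy_ne, hinj.eq_iff]

theorem adj_of_mem_cycW_of_mem_cycW_add_one (hP1P5 : P1P5Free G)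
    (hinj : Function.Injective v) (hcyc : ∀ i : Fin 5, G.Adj (v i) (v (i + 1)))
    (hindC : ∀ i j : Fin 5, G.Adj (v i) (v j) → j = i + 1 ∨ j = i - 1)
    {i : Fin 5} {x y : V} (hx : x ∈ cycW G v i) (hy : y ∈ cycW G v (i + 1)) :
    G.Adj x y := by
  refine adj_of_mem_cycW_zero_of_mem_cycW_one (v := fun b => v (i + b)) hP1P5
    (fun a b h => add_left_cancel (hinj h)) (fun a => by simpa [add_assoc] using hcyc (i + a))
    (fun a b h => ?_) ((mem_cycW_rotate i 0).2 (by simpa using hx)) ((mem_cycW_rotate i 1).2 hy)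
  simpa [add_assoc, add_sub_assoc] using hindC (i + a) (i + b) h

end SimpleGraph

theorem K3P1P5_Wi_complete_general {V : Type*} (G : SimpleGraph V)
    (hP1P5 : P1P5Free G)
    (v : Fin 5 → V) (hinj : Function.Injective v)
    (hcyc : ∀ i : Fin 5, G.Adj (v i) (v (i + 1)))
    (hindC : ∀ i j : Fin 5, G.Adj (v i) (v j) → j = i + 1 ∨ j = i - 1) :
    ∀ i : Fin 5, ∀ x ∈ cycW G v i, ∀ y ∈ cycW G v (i - 1) ∪ cycW G v (i + 1),
      G.Adj x y := by
  intro i x hx y hy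
  rcases hy with hy | hy
  · exact (G.adj_of_mem_cycW_of_mem_cycW_add_one hP1P5 hinj hcyc hindC hy
      (by rwa [sub_add_cancel])).symm
  · exact G.adj_of_mem_cycW_of_mem_cycW_add_one hP1P5 hinj hcyc hindC hx hy

/-- In a `(K₃, P₁ + P₅)`-free graph with an induced 5-cycle, `Wᵢ` is complete
to `W_{i-1} ∪ W_{i+1}`. -/
theorem K3P1P5_Wi_complete {V : Type*} [Fintype V] (G : SimpleGraph V)
    (hK3 : G.CliqueFree 3) (hP1P5 : P1P5Free G)
    (v : Fin 5 → V) (hinj : Function.Injective v)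
    (hcyc : ∀ i : Fin 5, G.Adj (v i) (v (i + 1)))
    (hindC : ∀ i j : Fin 5, G.Adj (v i) (v j) → j = i + 1 ∨ j = i - 1) :
    ∀ i : Fin 5, ∀ x ∈ cycW G v i, ∀ y ∈ cycW G v (i - 1) ∪ cycW G v (i + 1),
      G.Adj x y :=
  K3P1P5_Wi_complete_general G hP1P5 v hinj hcyc hindC
end

section
/- Let G be a (K_3, P_2 + P_4)-free graph containing an induced 5-cycle on vertices v_1, ..., v_5 in cyclic order, and for each i let W_i be the set of vertices whose unique neighbour on the cycle is v_i. Then for each i, W_i is either complete or anti-complete to W_{i+1} (indices mod 5). -/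
-- The six vertices are automatically distinct: every coincidence contradicts an adjacency.
theorem P2P4Free.elim {V : Type*} {G : SimpleGraph V} (h : P2P4Free G) {a b c d e f : V}
    (hab : G.Adj a b) (hcd : G.Adj c d) (hde : G.Adj d e) (hef : G.Adj e f)
    (hac : ¬ G.Adj a c) (had : ¬ G.Adj a d) (hae : ¬ G.Adj a e) (haf : ¬ G.Adj a f)
    (hbc : ¬ G.Adj b c) (hbd : ¬ G.Adj b d) (hbe : ¬ G.Adj b e) (hbf : ¬ G.Adj b f)
    (hce : ¬ G.Adj c e) (hcf : ¬ G.Adj c f) (hdf : ¬ G.Adj d f) : False := by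
  refine h ⟨a, b, c, d, e, f, ?_, hab, hcd, hde, hef, hac, had, hae, haf, hbc, hbd, hbe, hbf,
    hce, hcf, hdf⟩
  simp only [List.nodup_cons, List.mem_cons, List.not_mem_nil, or_false, not_or,
    List.nodup_nil, and_true, not_false_eq_true]
  refine ⟨⟨hab.ne, ?_, ?_, ?_, ?_⟩, ⟨?_, ?_, ?_, ?_⟩, ⟨hcd.ne, ?_, ?_⟩, ⟨hde.ne, ?_⟩, hef.ne⟩
  all_goals rintro rfl
  exacts [hbc hab.symm, hbd hab.symm, hbe hab.symm, hbf hab.symm, hac hab, had hab, hae hab,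
    haf hab, hcf hef, hce hef.symm, hcf hcd]

section InducedFiveCycle

variable {V : Type*} {G : SimpleGraph V} {v : Fin 5 → V}

theorem adj_of_mem_cycW {i : Fin 5} {u : V} (hu : u ∈ cycW G v i) : G.Adj (v i) u :=
  ((hu.2 i).2 rfl).symm

theorem not_adj_of_mem_cycW {i j : Fin 5} {u : V} (hu : u ∈ cycW G v i) (hji : j ≠ i) :
    ¬ G.Adj (v j) u :=
  fun h => hji ((hu.2 j).1 h.symm)

theorem adj_of_adj_of_mem_cycW (hK3 : G.CliqueFree 3) (hP2P4 : P2P4Free G)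
    (hcyc : ∀ i : Fin 5, G.Adj (v i) (v (i + 1)))
    (hindC : ∀ i j : Fin 5, G.Adj (v i) (v j) → j = i + 1 ∨ j = i - 1)
    {j k : Fin 5} (hjk : k = j + 1 ∨ j = k + 1) {p q r : V}
    (hp : p ∈ cycW G v j) (hq : q ∈ cycW G v j) (hr : r ∈ cycW G v k) (hqr : G.Adj q r) :
    G.Adj p r := by
  by_contra hpr
  have hpq : ¬ G.Adj p q := SimpleGraph.isIndepSet_neighborSet_of_triangleFree G hK3 (v j)
    (adj_of_mem_cycW hp) (adj_of_mem_cycW hq) (fun h => hpr (h ▸ hqr))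
  have hj2 : ¬ G.Adj (v (j + 2)) (v j) := fun h => by have := hindC _ _ h; grind
  have hj3 : ¬ G.Adj (v (j + 2 + 1)) (v j) := fun h => by have := hindC _ _ h; grind
  have hk2 : k ≠ j + 2 := by grind
  have hk3 : k ≠ j + 2 + 1 := by grind
  have hkj : k ≠ j := by grind
  refine hP2P4.elim (hcyc (j + 2)) (adj_of_mem_cycW hp).symm
    (adj_of_mem_cycW hq) hqr (not_adj_of_mem_cycW hp (by grind)) hj2
    (not_adj_of_mem_cycW hq (by grind)) (not_adj_of_mem_cycW hr hk2.symm)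
    (not_adj_of_mem_cycW hp (by grind)) hj3 (not_adj_of_mem_cycW hq (by grind))
    (not_adj_of_mem_cycW hr hk3.symm) hpq hpr (not_adj_of_mem_cycW hr hkj.symm)

end InducedFiveCycle

theorem K3P2P4_Wi_comp_or_anticomp_general {V : Type*} (G : SimpleGraph V)
    (hK3 : G.CliqueFree 3) (hP2P4 : P2P4Free G)
    (v : Fin 5 → V)
    (hcyc : ∀ i : Fin 5, G.Adj (v i) (v (i + 1)))
    (hindC : ∀ i j : Fin 5, G.Adj (v i) (v j) → j = i + 1 ∨ j = i - 1) :
    ∀ i : Fin 5,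
      (∀ x ∈ cycW G v i, ∀ y ∈ cycW G v (i + 1), G.Adj x y) ∨
      (∀ x ∈ cycW G v i, ∀ y ∈ cycW G v (i + 1), ¬ G.Adj x y) := by
  intro i
  refine or_iff_not_imp_right.2 fun h => ?_
  push Not at h
  obtain ⟨x₀, hx₀, y₀, hy₀, hxy₀⟩ := h
  intro x hx y hy
  have hx₀y : G.Adj x₀ y :=
    (adj_of_adj_of_mem_cycW hK3 hP2P4 hcyc hindC (Or.inr rfl) hy hy₀ hx₀ hxy₀.symm).symm
  exact adj_of_adj_of_mem_cycW hK3 hP2P4 hcyc hindC (Or.inl rfl) hx hx₀ hy hx₀y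

/-- In a `(K₃, P₂ + P₄)`-free graph with an induced 5-cycle, `Wᵢ` is either
complete or anti-complete to `W_{i+1}`. -/
theorem K3P2P4_Wi_comp_or_anticomp {V : Type*} [Fintype V] (G : SimpleGraph V)
    (hK3 : G.CliqueFree 3) (hP2P4 : P2P4Free G)
    (v : Fin 5 → V) (hinj : Function.Injective v)
    (hcyc : ∀ i : Fin 5, G.Adj (v i) (v (i + 1)))
    (hindC : ∀ i j : Fin 5, G.Adj (v i) (v j) → j = i + 1 ∨ j = i - 1) :
    ∀ i : Fin 5,
      (∀ x ∈ cycW G v i, ∀ y ∈ cycW G v (i + 1), G.Adj x y) ∨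
      (∀ x ∈ cycW G v i, ∀ y ∈ cycW G v (i + 1), ¬ G.Adj x y) :=
  K3P2P4_Wi_comp_or_anticomp_general G hK3 hP2P4 v hcyc hindC
end

section
/- Let G be a (K_3, P_1 + P_5)-free graph containing an induced 5-cycle on vertices v_1, ..., v_5 in cyclic order, and for each i let V_i be the set of vertices adjacent on the cycle to exactly v_{i-1} and v_{i+1}. Then every vertex of V_i is adjacent either to all vertices of V_{i-1} or to all vertices of V_{i+1} (indices mod 5). -/
/-! Suppose `x ∈ Vᵢ` misses some `y ∈ V_{i-1}` and some `z ∈ V_{i+1}`. Both `y` and `z` are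
adjacent to `vᵢ`, so triangle-freeness makes them non-adjacent, and then `y` is an isolated
vertex next to the induced path `v_{i-1} x v_{i+1} v_{i+2} z`. -/

namespace P1P5Free

variable {V : Type*} {G : SimpleGraph V}

/-- The distinctness required in `P1P5Free` is automatic: any two of the six vertices are told
apart by a third one adjacent to exactly one of them. -/
theorem false_of_induced (hG : P1P5Free G) {a b c d e f : V}
    (hbc : G.Adj b c) (hcd : G.Adj c d) (hde : G.Adj d e) (hef : G.Adj e f)
    (hab : ¬ G.Adj a b) (hac : ¬ G.Adj a c) (had : ¬ G.Adj a d) (hae : ¬ G.Adj a e)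
    (haf : ¬ G.Adj a f) (hbd : ¬ G.Adj b d) (hbe : ¬ G.Adj b e) (hbf : ¬ G.Adj b f)
    (hce : ¬ G.Adj c e) (hcf : ¬ G.Adj c f) (hdf : ¬ G.Adj d f) : False := by
  refine hG ⟨a, b, c, d, e, f, ?_, hbc, hcd, hde, hef, hab, hac, had, hae, haf, hbd, hbe, hbf,
    hce, hcf, hdf⟩
  simp only [List.nodup_cons, List.mem_cons, List.not_mem_nil, List.nodup_nil, or_false,
    not_or, and_true, not_false_eq_true]
  exact ⟨⟨fun h ↦ hac (h ▸ hbc), fun h ↦ hab (h ▸ hbc.symm), fun h ↦ hac (h ▸ hcd.symm),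
      fun h ↦ had (h ▸ hde.symm), fun h ↦ hae (h ▸ hef.symm)⟩,
    ⟨hbc.ne, fun h ↦ hbe (h ▸ hde), fun h ↦ hbd (h ▸ hde.symm), fun h ↦ hbe (h ▸ hef.symm)⟩,
    ⟨hcd.ne, fun h ↦ hbe (h ▸ hbc), fun h ↦ hbf (h ▸ hbc)⟩, ⟨hde.ne, fun h ↦ hcf (h ▸ hcd)⟩,
    hef.ne⟩

end P1P5Free

section FiveCycle

variable {V : Type*} {G : SimpleGraph V} {v : Fin 5 → V} {i j : Fin 5} {x : V}

theorem adj_pred_of_mem_cycV (hx : x ∈ cycV G v i) : G.Adj x (v (i - 1)) :=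
  (hx.2 _).2 (.inl rfl)

theorem adj_succ_of_mem_cycV (hx : x ∈ cycV G v i) : G.Adj x (v (i + 1)) :=
  (hx.2 _).2 (.inr rfl)

theorem not_adj_of_mem_cycV (hx : x ∈ cycV G v i) (hj₁ : j ≠ i - 1) (hj₂ : j ≠ i + 1) :
    ¬ G.Adj x (v j) :=
  fun h ↦ ((hx.2 j).1 h).elim hj₁ hj₂

end FiveCycle

theorem K3P1P5_Vi_dominates_general {V : Type*} (G : SimpleGraph V)
    (hK3 : G.CliqueFree 3) (hP1P5 : P1P5Free G)
    (v : Fin 5 → V)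
    (hcyc : ∀ i : Fin 5, G.Adj (v i) (v (i + 1)))
    (hindC : ∀ i j : Fin 5, G.Adj (v i) (v j) → j = i + 1 ∨ j = i - 1) :
    ∀ i : Fin 5, ∀ x ∈ cycV G v i,
      (∀ y ∈ cycV G v (i - 1), G.Adj x y) ∨
      (∀ y ∈ cycV G v (i + 1), G.Adj x y) := by
  intro i x hx
  by_contra! h
  obtain ⟨⟨y, hy, hxy⟩, z, hz, hxz⟩ := h
  have hnC : ∀ j k : Fin 5, k ≠ j + 1 → k ≠ j - 1 → ¬ G.Adj (v j) (v k) :=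
    fun j k h₁ h₂ hjk ↦ (hindC j k hjk).elim h₁ h₂
  have hyi : G.Adj (v i) y := by simpa using (adj_succ_of_mem_cycV hy).symm
  have hzi : G.Adj (v i) z := by simpa using (adj_pred_of_mem_cycV hz).symm
  have hyz : ¬ G.Adj y z := fun h ↦
    G.isIndepSet_neighborSet_of_triangleFree hK3 (v i) hyi hzi h.ne h
  exact hP1P5.false_of_induced (a := y)
    (hbc := (adj_pred_of_mem_cycV hx).symm) (hcd := adj_succ_of_mem_cycV hx)
    (hde := hcyc (i + 1)) (hef := (adj_succ_of_mem_cycV hz).symm)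
    (hab := not_adj_of_mem_cycV hy (by omega) (by omega)) (hac := fun h ↦ hxy h.symm)
    (had := not_adj_of_mem_cycV hy (by omega) (by omega))
    (hae := not_adj_of_mem_cycV hy (by omega) (by omega)) (haf := hyz)
    (hbd := hnC _ _ (by omega) (by omega)) (hbe := hnC _ _ (by omega) (by omega))
    (hbf := fun h ↦ not_adj_of_mem_cycV hz (by omega) (by omega) h.symm)
    (hce := not_adj_of_mem_cycV hx (by omega) (by omega)) (hcf := hxz)
    (hdf := fun h ↦ not_adj_of_mem_cycV hz (by omega) (by omega) h.symm)

/-- In a `(K₃, P₁ + P₅)`-free graph with an induced 5-cycle, every vertex of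
`Vᵢ` dominates either `V_{i-1}` or `V_{i+1}`. -/
theorem K3P1P5_Vi_dominates {V : Type*} [Fintype V] (G : SimpleGraph V)
    (hK3 : G.CliqueFree 3) (hP1P5 : P1P5Free G)
    (v : Fin 5 → V) (hinj : Function.Injective v)
    (hcyc : ∀ i : Fin 5, G.Adj (v i) (v (i + 1)))
    (hindC : ∀ i j : Fin 5, G.Adj (v i) (v j) → j = i + 1 ∨ j = i - 1) :
    ∀ i : Fin 5, ∀ x ∈ cycV G v i,
      (∀ y ∈ cycV G v (i - 1), G.Adj x y) ∨
      (∀ y ∈ cycV G v (i + 1), G.Adj x y) :=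
  K3P1P5_Vi_dominates_general G hK3 hP1P5 v hcyc hindC
end

section
/- Let G be a (K_3, P_2 + P_4)-free graph containing an induced 5-cycle on vertices v_1, ..., v_5 in cyclic order, with W_i and V_i defined as the sets of vertices whose cycle-neighbourhood is {v_i} and {v_{i-1}, v_{i+1}} respectively. If x ∈ W_i, y ∈ V_{i+2}, and z ∈ V_{i+3}, then x, y, z do not form an independent set of size 3 (indices mod 5). -/
namespace P2P4Free

variable {V : Type*} {G : SimpleGraph V}

theorem false_of_induced (hG : P2P4Free G) {a b c d e f : V}
    (hab : G.Adj a b) (hcd : G.Adj c d) (hde : G.Adj d e) (hef : G.Adj e f)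
    (hac : ¬ G.Adj a c) (had : ¬ G.Adj a d) (hae : ¬ G.Adj a e) (haf : ¬ G.Adj a f)
    (hbc : ¬ G.Adj b c) (hbd : ¬ G.Adj b d) (hbe : ¬ G.Adj b e) (hbf : ¬ G.Adj b f)
    (hce : ¬ G.Adj c e) (hcf : ¬ G.Adj c f) (hdf : ¬ G.Adj d f) : False := by
  refine hG ⟨a, b, c, d, e, f, ?_, hab, hcd, hde, hef, hac, had, hae, haf, hbc, hbd, hbe, hbf,
    hce, hcf, hdf⟩
  simp only [List.nodup_cons, List.mem_cons, List.not_mem_nil, List.nodup_nil, or_false,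
    not_or, and_true, not_false_eq_true]
  -- any two of the six vertices are told apart by the adjacency pattern
  refine ⟨⟨?_, ?_, ?_, ?_, ?_⟩, ⟨?_, ?_, ?_, ?_⟩, ⟨?_, ?_, ?_⟩, ⟨?_, ?_⟩, ?_⟩ <;> rintro rfl
  all_goals simp_all [G.adj_comm]

end P2P4Free

theorem SimpleGraph.adj_cycle_iff {V : Type*} {G : SimpleGraph V} {n : ℕ} [NeZero n]
    {v : Fin n → V} (hcyc : ∀ i, G.Adj (v i) (v (i + 1)))
    (hind : ∀ i j, G.Adj (v i) (v j) → j = i + 1 ∨ j = i - 1) {i j : Fin n} :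
    G.Adj (v i) (v j) ↔ j = i + 1 ∨ j = i - 1 := by
  refine ⟨hind i j, ?_⟩
  rintro (rfl | rfl)
  · exact hcyc i
  · simpa using (hcyc (i - 1)).symm

theorem K3P2P4_no_rainbow_3P1_general {V : Type*} (G : SimpleGraph V)
    (hP2P4 : P2P4Free G)
    (v : Fin 5 → V)
    (hcyc : ∀ i : Fin 5, G.Adj (v i) (v (i + 1)))
    (hindC : ∀ i j : Fin 5, G.Adj (v i) (v j) → j = i + 1 ∨ j = i - 1) :
    ∀ i : Fin 5, ∀ x ∈ cycW G v i, ∀ y ∈ cycV G v (i + 2), ∀ z ∈ cycV G v (i + 3),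
      G.Adj x y ∨ G.Adj x z ∨ G.Adj y z := by
  rintro i x ⟨-, hx⟩ y ⟨-, hy⟩ z ⟨-, hz⟩
  by_contra! ⟨hxy, hxz, hyz⟩
  -- `x v_i` and `y v_{i+3} v_{i+2} z` induce `P₂ + P₄`
  refine hP2P4.false_of_induced (a := x) (b := v i) (c := y) (d := v (i + 3)) (e := v (i + 2))
    (f := z) ?_ ?_ ?_ ?_ hxy ?_ ?_ hxz ?_ ?_ ?_ ?_ ?_ hyz ?_
  all_goals
    simp only [G.adj_comm (v _) y, G.adj_comm (v _) z, hx, hy, hz, G.adj_cycle_iff hcyc hindC]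
      <;> omega

/-- In a `(K₃, P₂ + P₄)`-free graph with an induced 5-cycle, no vertices
`x ∈ Wᵢ`, `y ∈ V_{i+2}`, `z ∈ V_{i+3}` form an independent set of size 3. -/
theorem K3P2P4_no_rainbow_3P1 {V : Type*} [Fintype V] (G : SimpleGraph V)
    (hK3 : G.CliqueFree 3) (hP2P4 : P2P4Free G)
    (v : Fin 5 → V) (hinj : Function.Injective v)
    (hcyc : ∀ i : Fin 5, G.Adj (v i) (v (i + 1)))
    (hindC : ∀ i j : Fin 5, G.Adj (v i) (v j) → j = i + 1 ∨ j = i - 1) :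
    ∀ i : Fin 5, ∀ x ∈ cycW G v i, ∀ y ∈ cycV G v (i + 2), ∀ z ∈ cycV G v (i + 3),
      G.Adj x y ∨ G.Adj x z ∨ G.Adj y z :=
  K3P2P4_no_rainbow_3P1_general G hP2P4 v hcyc hindC
end

section
/- Let G be a (K_3, P_1 + P_5)-free graph containing an induced 5-cycle on vertices v_1, ..., v_5 in cyclic order, with W_i and V_i the sets of vertices whose cycle-neighbourhood is {v_i} and {v_{i-1}, v_{i+1}} respectively. If x ∈ W_i, y ∈ V_{i+2}, and z ∈ V_{i+3}, then x, y, z do not form an independent set of size 3 (indices mod 5). -/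
/-!
If `x`, `y`, `z` were pairwise non-adjacent, then `x` would have no neighbour on the path
`y, v (i + 1), v (i + 2), z, v (i + 4)`, and this path is induced, so the two would form
an induced `P₁ + P₅`.
-/

/-- The six vertices need not be assumed distinct: the adjacency pattern separates them. -/
theorem P1P5Free.false_of_adj {V : Type*} {G : SimpleGraph V} (hG : P1P5Free G)
    {a b c d e f : V} (hbc : G.Adj b c) (hcd : G.Adj c d) (hde : G.Adj d e) (hef : G.Adj e f)
    (hab : ¬ G.Adj a b) (hac : ¬ G.Adj a c) (had : ¬ G.Adj a d) (hae : ¬ G.Adj a e)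
    (haf : ¬ G.Adj a f) (hbd : ¬ G.Adj b d) (hbe : ¬ G.Adj b e) (hbf : ¬ G.Adj b f)
    (hce : ¬ G.Adj c e) (hcf : ¬ G.Adj c f) (hdf : ¬ G.Adj d f) : False := by
  refine hG ⟨a, b, c, d, e, f, ?_, hbc, hcd, hde, hef, hab, hac, had, hae, haf, hbd, hbe, hbf,
    hce, hcf, hdf⟩
  simp only [List.nodup_cons, List.mem_cons, List.not_mem_nil, List.nodup_nil, or_false, not_or,
    not_false_eq_true, and_true]
  refine ⟨⟨?_, ?_, ?_, ?_, ?_⟩, ⟨?_, ?_, ?_, ?_⟩, ⟨?_, ?_, ?_⟩, ⟨?_, ?_⟩, ?_⟩ <;> rintro rfl <;>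
    simp_all [G.adj_comm]

theorem K3P1P5_no_rainbow_3P1_general {V : Type*} (G : SimpleGraph V)
    (hP1P5 : P1P5Free G)
    (v : Fin 5 → V)
    (hcyc : ∀ i : Fin 5, G.Adj (v i) (v (i + 1)))
    (hindC : ∀ i j : Fin 5, G.Adj (v i) (v j) → j = i + 1 ∨ j = i - 1) :
    ∀ i : Fin 5, ∀ x ∈ cycW G v i, ∀ y ∈ cycV G v (i + 2), ∀ z ∈ cycV G v (i + 3),
      G.Adj x y ∨ G.Adj x z ∨ G.Adj y z := by
  intro i x hx y hy z hz
  by_contra! hxyz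
  obtain ⟨hxy, hxz, hyz⟩ := hxyz
  have hchord : ∀ j k : Fin 5, k ≠ j + 1 → k ≠ j - 1 → ¬ G.Adj (v j) (v k) :=
    fun j k h₁ h₂ h ↦ (hindC j k h).elim h₁ h₂
  have hv12 : G.Adj (v (i + 1)) (v (i + 2)) := by
    convert hcyc (i + 1) using 2
    omega
  exact hP1P5.false_of_adj (a := x) (b := y) (c := v (i + 1)) (d := v (i + 2)) (e := z)
    (f := v (i + 4))
    (hbc := (hy.2 _).2 (by omega)) (hcd := hv12) (hde := ((hz.2 _).2 (by omega)).symm)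
    (hef := (hz.2 _).2 (by omega))
    (hab := hxy) (hac := mt (hx.2 _).1 (by omega)) (had := mt (hx.2 _).1 (by omega))
    (hae := hxz) (haf := mt (hx.2 _).1 (by omega))
    (hbd := mt (hy.2 _).1 (by omega)) (hbe := hyz) (hbf := mt (hy.2 _).1 (by omega))
    (hce := fun h ↦ mt (hz.2 _).1 (by omega) h.symm)
    (hcf := hchord _ _ (by omega) (by omega)) (hdf := hchord _ _ (by omega) (by omega))

/-- In a `(K₃, P₁ + P₅)`-free graph with an induced 5-cycle, no vertices
`x ∈ Wᵢ`, `y ∈ V_{i+2}`, `z ∈ V_{i+3}` form an independent set of size 3. -/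
theorem K3P1P5_no_rainbow_3P1 {V : Type*} [Fintype V] (G : SimpleGraph V)
    (hK3 : G.CliqueFree 3) (hP1P5 : P1P5Free G)
    (v : Fin 5 → V) (hinj : Function.Injective v)
    (hcyc : ∀ i : Fin 5, G.Adj (v i) (v (i + 1)))
    (hindC : ∀ i j : Fin 5, G.Adj (v i) (v j) → j = i + 1 ∨ j = i - 1) :
    ∀ i : Fin 5, ∀ x ∈ cycW G v i, ∀ y ∈ cycV G v (i + 2), ∀ z ∈ cycV G v (i + 3),
      G.Adj x y ∨ G.Adj x z ∨ G.Adj y z :=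
  K3P1P5_no_rainbow_3P1_general G hP1P5 v hcyc hindC
end

section
/- Let G be a triangle-free graph containing an induced 5-cycle on vertices v_1, ..., v_5 in cyclic order, with V_i the set of vertices adjacent on the cycle to exactly v_{i-1} and v_{i+1}, and U the set of vertices with no neighbour on the cycle. If x ∈ V_i is adjacent to y ∈ U, and additionally G is (P_2 + P_4)-free, then every vertex z ∈ V_{i-1} ∪ V_{i+1} is adjacent to exactly one of x and y (indices mod 5). -/
/-!
If `z ∈ V_{i±1}` were adjacent to both `x` and `y`, then `x y z` would be a triangle. If it were
adjacent to neither, then, writing `j = i ± 1`, the edge `x y` together with the path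
`v i, z, v (2j - i), v (3j - 2i)` (from `v i` through `z` and on around the cycle, away from `v j`)
would induce a `P₂ + P₄`: `x` sees only `v (i ± 1)` on the cycle, and `y` sees none of it.
-/

lemma Fin.five_detour_arith {i j : Fin 5} (hij : j = i + 1 ∨ j = i - 1) :
    ¬(i = i - 1 ∨ i = i + 1) ∧ (i = j - 1 ∨ i = j + 1) ∧ (2 * j - i = j - 1 ∨ 2 * j - i = j + 1) ∧
      (3 * j - 2 * i = 2 * j - i + 1 ∨ 3 * j - 2 * i = 2 * j - i - 1) ∧
      ¬(2 * j - i = i + 1 ∨ 2 * j - i = i - 1) ∧ ¬(3 * j - 2 * i = i + 1 ∨ 3 * j - 2 * i = i - 1) ∧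
      ¬(3 * j - 2 * i = j - 1 ∨ 3 * j - 2 * i = j + 1) ∧
      i ≠ 2 * j - i ∧ i ≠ 3 * j - 2 * i ∧ 2 * j - i ≠ 3 * j - 2 * i := by
  rcases hij with rfl | rfl <;> revert i <;> decide

namespace SimpleGraph

variable {V : Type*} {G : SimpleGraph V} {v : Fin 5 → V}

lemma adj_cycle_iff_s19 (hcyc : ∀ i : Fin 5, G.Adj (v i) (v (i + 1)))
    (hindC : ∀ i j : Fin 5, G.Adj (v i) (v j) → j = i + 1 ∨ j = i - 1) (a b : Fin 5) :
    G.Adj (v a) (v b) ↔ b = a + 1 ∨ b = a - 1 := by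
  refine ⟨hindC a b, ?_⟩
  rintro (rfl | rfl)
  · exact hcyc a
  · simpa using (hcyc (a - 1)).symm

lemma CliqueFree.not_adj_and_adj (hK3 : G.CliqueFree 3) {x y : V} (hxy : G.Adj x y) (z : V) :
    ¬(G.Adj z x ∧ G.Adj z y) :=
  fun ⟨hzx, hzy⟩ => isIndepSet_neighborSet_of_triangleFree G hK3 z hzx hzy hxy.ne hxy

lemma _root_.P2P4Free.adj_or_adj_of_mem_cycV (hP2P4 : P2P4Free G) (hinj : Function.Injective v)
    (hadj : ∀ a b : Fin 5, G.Adj (v a) (v b) ↔ b = a + 1 ∨ b = a - 1)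
    {i j : Fin 5} (hij : j = i + 1 ∨ j = i - 1) {x y z : V} (hx : x ∈ cycV G v i)
    (hy : y ∈ cycU G v) (hxy : G.Adj x y) (hz : z ∈ cycV G v j) :
    G.Adj z x ∨ G.Adj z y := by
  obtain ⟨hii, hzi, hzk, hkl, hik, hil, hzl, hik', hil', hkl'⟩ := Fin.five_detour_arith hij
  have ne_of_notMem_range {u : V} (hu : u ∉ Set.range v) (a : Fin 5) : u ≠ v a :=
    fun h => hu ⟨a, h.symm⟩
  have hx₀ := ne_of_notMem_range hx.1
  have hy₀ := ne_of_notMem_range hy.1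
  have hz₀ := ne_of_notMem_range hz.1
  by_contra! ⟨hzx, hzy⟩
  refine hP2P4 ⟨x, y, v i, z, v (2 * j - i), v (3 * j - 2 * i), ?_, hxy,
    ((hz.2 i).2 hzi).symm, (hz.2 _).2 hzk, (hadj _ _).2 hkl,
    fun h => hii ((hx.2 i).1 h), fun h => hzx h.symm,
    fun h => hik ((hx.2 _).1 h).symm, fun h => hil ((hx.2 _).1 h).symm,
    hy.2 i, fun h => hzy h.symm, hy.2 _, hy.2 _,
    fun h => hik ((hadj _ _).1 h), fun h => hil ((hadj _ _).1 h),
    fun h => hzl ((hz.2 _).1 h)⟩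
  simp only [List.nodup_cons, List.mem_cons, List.not_mem_nil, or_false, not_or,
    List.nodup_nil, and_true, not_false_eq_true]
  exact ⟨⟨hxy.ne, hx₀ i, fun h => hzy (h ▸ hxy), hx₀ _, hx₀ _⟩,
    ⟨hy₀ i, fun h => hzx (h ▸ hxy.symm), hy₀ _, hy₀ _⟩,
    ⟨(hz₀ i).symm, hinj.ne hik', hinj.ne hil'⟩, ⟨hz₀ _, hz₀ _⟩, hinj.ne hkl'⟩

end SimpleGraph

open SimpleGraph in
theorem K3P2P4_ViU_distinguish_general {V : Type*} (G : SimpleGraph V)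
    (hK3 : G.CliqueFree 3) (hP2P4 : P2P4Free G)
    (v : Fin 5 → V) (hinj : Function.Injective v)
    (hcyc : ∀ i : Fin 5, G.Adj (v i) (v (i + 1)))
    (hindC : ∀ i j : Fin 5, G.Adj (v i) (v j) → j = i + 1 ∨ j = i - 1) :
    ∀ i : Fin 5, ∀ x ∈ cycV G v i, ∀ y ∈ cycU G v, G.Adj x y →
      ∀ z ∈ cycV G v (i - 1) ∪ cycV G v (i + 1),
        (G.Adj z x ∧ ¬ G.Adj z y) ∨ (¬ G.Adj z x ∧ G.Adj z y) := by
  intro i x hx y hy hxy z hz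
  obtain ⟨j, hij, hzj⟩ : ∃ j, (j = i + 1 ∨ j = i - 1) ∧ z ∈ cycV G v j := by
    rcases hz with hz | hz
    exacts [⟨_, Or.inr rfl, hz⟩, ⟨_, Or.inl rfl, hz⟩]
  have hsome := hP2P4.adj_or_adj_of_mem_cycV hinj (adj_cycle_iff_s19 hcyc hindC) hij hx hy hxy hzj
  have hnotboth := hK3.not_adj_and_adj hxy z
  tauto

/-- In a `(K₃, P₂ + P₄)`-free graph with an induced 5-cycle, if `x ∈ Vᵢ` is
adjacent to `y ∈ U`, then every vertex of `V_{i-1} ∪ V_{i+1}` is adjacent to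
exactly one of `x` and `y`. -/
theorem K3P2P4_ViU_distinguish {V : Type*} [Fintype V] (G : SimpleGraph V)
    (hK3 : G.CliqueFree 3) (hP2P4 : P2P4Free G)
    (v : Fin 5 → V) (hinj : Function.Injective v)
    (hcyc : ∀ i : Fin 5, G.Adj (v i) (v (i + 1)))
    (hindC : ∀ i j : Fin 5, G.Adj (v i) (v j) → j = i + 1 ∨ j = i - 1) :
    ∀ i : Fin 5, ∀ x ∈ cycV G v i, ∀ y ∈ cycU G v, G.Adj x y →
      ∀ z ∈ cycV G v (i - 1) ∪ cycV G v (i + 1),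
        (G.Adj z x ∧ ¬ G.Adj z y) ∨ (¬ G.Adj z x ∧ G.Adj z y) :=
  K3P2P4_ViU_distinguish_general G hK3 hP2P4 v hinj hcyc hindC
end
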